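/- Let σ ∈ L^q([0,1]) be a distortion and L ∈ L^p a real random variable for conjugate exponents p, q. Let U be uniformly distributed on the same probability space, τ_σ(p) := ∫₀^p σ(u) du with generalized inverse τ_σ⁻¹, and L_σ := F_L⁻¹(τ_σ⁻¹(U)). Then E[L_σ] = ∫₀¹ F_L⁻¹(τ_σ⁻¹(u)) du = ∫₀¹ F_L⁻¹(u) σ(u) du = π_σ(L). -/

import Mathlib

/-!
Write `T = tauSigma σ`. Since `σ ≥ 0` is integrable with total mass one, `T` is a continuous
nondecreasing map of `[0,1]` onto itself, so its generalized inverse satisfies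
`T⁻¹ u ≤ v ↔ u ≤ T v`. Hence `T⁻¹` pushes Lebesgue measure on `(0,1]` forward to the measure with
density `σ`, and `∫₀¹ g (T⁻¹ u) du = ∫₀¹ g u σ u du` for every measurable `g`; the quantile
function is monotone on `(0,1)`, hence measurable. A uniform `U` has law Lebesgue measure on
`(0,1]`, which turns `E[g U]` into `∫₀¹ g`.
-/

open MeasureTheory Set
open scoped ENNReal

/-- The cumulative distribution function `F_L(x) = P(L ≤ x)` of a random variable `L`. -/
noncomputable def cdfRV {Ω : Type*} [MeasurableSpace Ω] (P : Measure Ω) (L : Ω → ℝ) (x : ℝ) : ℝ :=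
  (P {ω | L ω ≤ x}).toReal

/-- The generalized inverse (quantile function) `F_L⁻¹(u) = inf {x : F_L(x) ≥ u}`. -/
noncomputable def quantileRV {Ω : Type*} [MeasurableSpace Ω] (P : Measure Ω) (L : Ω → ℝ)
    (u : ℝ) : ℝ :=
  sInf {x : ℝ | u ≤ cdfRV P L x}

/-- The σ-distorted premium `π_σ(L) = ∫₀¹ F_L⁻¹(u) σ(u) du`. -/
noncomputable def distortedPremium {Ω : Type*} [MeasurableSpace Ω] (P : Measure Ω)
    (L : Ω → ℝ) (σ : ℝ → ℝ) : ℝ :=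
  ∫ u in (0:ℝ)..1, quantileRV P L u * σ u

/-- `τ_σ(p) = ∫₀^p σ(u) du`, the antiderivative of the distortion `σ`. -/
noncomputable def tauSigma (σ : ℝ → ℝ) (p : ℝ) : ℝ := ∫ u in (0:ℝ)..p, σ u

/-- The generalized inverse `τ_σ⁻¹(u) = inf {p ∈ [0,1] : τ_σ(p) ≥ u}`. -/
noncomputable def tauSigmaInv (σ : ℝ → ℝ) (u : ℝ) : ℝ :=
  sInf {p : ℝ | p ∈ Icc (0:ℝ) 1 ∧ u ≤ tauSigma σ p}

/-- `U` is uniformly distributed: `P(U ≤ u) = u` for all `u ∈ [0,1]`. -/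
def IsUniformRV {Ω : Type*} [MeasurableSpace Ω] (P : Measure Ω) (U : Ω → ℝ) : Prop :=
  ∀ u ∈ Icc (0:ℝ) 1, (P {ω | U ω ≤ u}).toReal = u

open Filter Topology ProbabilityTheory

theorem monotoneOn_sInf_setOf_le {F : ℝ → ℝ} {a b : ℝ} (hF : Monotone F)
    (hbot : Tendsto F atBot (𝓝 a)) (htop : Tendsto F atTop (𝓝 b)) :
    MonotoneOn (fun u => sInf {x | u ≤ F x}) (Ioo a b) := by
  intro u hu v hv huv
  obtain ⟨x₀, hx₀⟩ := (hbot.eventually (eventually_lt_nhds hu.1)).exists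
  obtain ⟨x₁, hx₁⟩ := (htop.eventually (eventually_ge_nhds hv.2)).exists
  have hbdd : BddBelow {x | u ≤ F x} :=
    ⟨x₀, fun x hx => le_of_not_gt fun hlt => (hx.trans (hF hlt.le)).not_gt hx₀⟩
  exact csInf_le_csInf hbdd ⟨x₁, hx₁⟩ fun x hx => huv.trans hx

section Quantile

variable {Ω : Type*} [MeasurableSpace Ω] (P : Measure Ω) [IsProbabilityMeasure P] {L : Ω → ℝ}

theorem cdfRV_eq_cdf_map (hL : Measurable L) : cdfRV P L = cdf (P.map L) := by
  have : IsProbabilityMeasure (P.map L) := Measure.isProbabilityMeasure_map hL.aemeasurable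
  ext x
  rw [cdf_eq_real, measureReal_def, Measure.map_apply hL measurableSet_Iic]
  rfl

theorem monotoneOn_quantileRV (hL : Measurable L) : MonotoneOn (quantileRV P L) (Ioo 0 1) := by
  have : IsProbabilityMeasure (P.map L) := Measure.isProbabilityMeasure_map hL.aemeasurable
  unfold quantileRV
  rw [cdfRV_eq_cdf_map P hL]
  exact monotoneOn_sInf_setOf_le (monotone_cdf _) (tendsto_cdf_atBot _) (tendsto_cdf_atTop _)

theorem aestronglyMeasurable_quantileRV (hL : Measurable L) :
    AEStronglyMeasurable (quantileRV P L) (volume.restrict (Ioc 0 1)) := by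
  rw [← Measure.restrict_congr_set Ioo_ae_eq_Ioc]
  exact (aemeasurable_restrict_of_monotoneOn measurableSet_Ioo
    (monotoneOn_quantileRV P hL)).aestronglyMeasurable

end Quantile

section Tau

variable {σ : ℝ → ℝ}

theorem continuousOn_tauSigma (hσ : IntegrableOn σ (Icc 0 1)) :
    ContinuousOn (tauSigma σ) (Icc 0 1) := by
  have := intervalIntegral.continuousOn_primitive_interval (a := 0) (b := 1)
    (by rwa [uIcc_of_le zero_le_one])
  rwa [uIcc_of_le zero_le_one] at this

theorem monotoneOn_tauSigma (hσ : IntegrableOn σ (Icc 0 1)) (hσ0 : ∀ u ∈ Icc (0:ℝ) 1, 0 ≤ σ u) :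
    MonotoneOn (tauSigma σ) (Icc 0 1) := by
  have hII : ∀ b ∈ Icc (0:ℝ) 1, IntervalIntegrable σ volume 0 b := fun b hb =>
    (hσ.mono_set (by rw [uIcc_of_le hb.1]; exact Icc_subset_Icc_right hb.2)).intervalIntegrable
  intro a ha b hb hab
  have hsub : tauSigma σ b - tauSigma σ a = ∫ u in a..b, σ u :=
    intervalIntegral.integral_interval_sub_left (hII b hb) (hII a ha)
  have hnonneg : 0 ≤ ∫ u in a..b, σ u :=
    intervalIntegral.integral_nonneg hab fun u hu => hσ0 u ⟨ha.1.trans hu.1, hu.2.trans hb.2⟩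
  linarith

theorem tauSigmaInv_mem (hσ : IntegrableOn σ (Icc 0 1)) {u : ℝ} (hu : u ≤ tauSigma σ 1) :
    tauSigmaInv σ u ∈ Icc (0:ℝ) 1 ∧ u ≤ tauSigma σ (tauSigmaInv σ u) := by
  have hclosed : IsClosed {p : ℝ | p ∈ Icc (0:ℝ) 1 ∧ u ≤ tauSigma σ p} :=
    (continuousOn_tauSigma hσ).preimage_isClosed_of_isClosed isClosed_Icc isClosed_Ici
  exact hclosed.csInf_mem ⟨1, ⟨zero_le_one, le_rfl⟩, hu⟩ ⟨0, fun p hp => hp.1.1⟩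

theorem tauSigmaInv_le_iff (hσ : IntegrableOn σ (Icc 0 1)) (hσ0 : ∀ u ∈ Icc (0:ℝ) 1, 0 ≤ σ u)
    {u v : ℝ} (hu : u ≤ tauSigma σ 1) (hv : v ∈ Icc (0:ℝ) 1) :
    tauSigmaInv σ u ≤ v ↔ u ≤ tauSigma σ v := by
  obtain ⟨hmem, hle⟩ := tauSigmaInv_mem hσ hu
  exact ⟨fun h => hle.trans (monotoneOn_tauSigma hσ hσ0 hmem hv h),
    fun h => csInf_le ⟨0, fun p hp => hp.1.1⟩ ⟨hv, h⟩⟩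

theorem monotoneOn_tauSigmaInv : MonotoneOn (tauSigmaInv σ) (Iic (tauSigma σ 1)) :=
  fun _ _ _ hv huv => csInf_le_csInf ⟨0, fun _ hp => hp.1.1⟩ ⟨1, ⟨zero_le_one, le_rfl⟩, hv⟩
    fun _ hp => ⟨hp.1, huv.trans hp.2⟩

theorem ofReal_tauSigma (hσ : IntegrableOn σ (Icc 0 1)) (hσ0 : ∀ u ∈ Icc (0:ℝ) 1, 0 ≤ σ u)
    {w : ℝ} (hw : w ∈ Icc (0:ℝ) 1) :
    ENNReal.ofReal (tauSigma σ w) = ∫⁻ u in Ioc 0 w, ENNReal.ofReal (σ u) := by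
  rw [tauSigma, intervalIntegral.integral_of_le hw.1]
  exact ofReal_integral_eq_lintegral_ofReal
    (hσ.mono_set (Ioc_subset_Icc_self.trans (Icc_subset_Icc_right hw.2)))
    ((ae_restrict_iff' measurableSet_Ioc).2
      (ae_of_all _ fun u hu => hσ0 u ⟨hu.1.le, hu.2.trans hw.2⟩))

theorem aemeasurable_tauSigmaInv (h1 : tauSigma σ 1 = 1) :
    AEMeasurable (tauSigmaInv σ) (volume.restrict (Ioc 0 1)) :=
  aemeasurable_restrict_of_monotoneOn measurableSet_Ioc
    (monotoneOn_tauSigmaInv.mono fun _ hu => hu.2.trans h1.ge)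

variable (hσ : IntegrableOn σ (Icc 0 1)) (hσ0 : ∀ u ∈ Icc (0:ℝ) 1, 0 ≤ σ u)
  (h1 : tauSigma σ 1 = 1)
include hσ hσ0 h1

theorem map_tauSigmaInv :
    (volume.restrict (Ioc 0 1)).map (tauSigmaInv σ) =
      (volume.restrict (Ioc 0 1)).withDensity fun u => ENNReal.ofReal (σ u) := by
  have hTi := aemeasurable_tauSigmaInv h1
  have : IsFiniteMeasure ((volume.restrict (Ioc (0:ℝ) 1)).map (tauSigmaInv σ)) :=
    Measure.isFiniteMeasure_map _ _
  refine Measure.ext_of_Iic _ _ fun v => ?_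
  rw [Measure.map_apply_of_aemeasurable hTi measurableSet_Iic,
    withDensity_apply _ measurableSet_Iic, Measure.restrict_apply' measurableSet_Ioc,
    Measure.restrict_restrict measurableSet_Iic, inter_comm (Iic v), Ioc_inter_Iic]
  rcases lt_or_ge v 0 with hv | hv
  · have hempty : tauSigmaInv σ ⁻¹' Iic v ∩ Ioc 0 1 = ∅ :=
      eq_empty_of_forall_notMem fun u ⟨hu, hu'⟩ =>
        hv.not_ge ((tauSigmaInv_mem hσ (hu'.2.trans h1.ge)).1.1.trans hu)
    rw [hempty, Ioc_eq_empty ((min_le_right _ _).trans hv.le).not_gt, measure_empty,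
      Measure.restrict_empty, lintegral_zero_measure]
  · set w := min 1 v
    have hw : w ∈ Icc (0:ℝ) 1 := ⟨le_min zero_le_one hv, min_le_left _ _⟩
    have hTw : tauSigma σ w ≤ 1 :=
      (monotoneOn_tauSigma hσ hσ0 hw ⟨zero_le_one, le_rfl⟩ hw.2).trans h1.le
    have hpre : tauSigmaInv σ ⁻¹' Iic v ∩ Ioc 0 1 = Ioc 0 (tauSigma σ w) := by
      ext u
      simp only [mem_inter_iff, mem_preimage, mem_Iic, mem_Ioc]
      constructor
      · rintro ⟨hle, hu0, hu1⟩
        have hu1' : u ≤ tauSigma σ 1 := hu1.trans h1.ge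
        exact ⟨hu0, (tauSigmaInv_le_iff hσ hσ0 hu1' hw).1
          (le_min (tauSigmaInv_mem hσ hu1').1.2 hle)⟩
      · rintro ⟨hu0, hu⟩
        have hu1 : u ≤ tauSigma σ 1 := (hu.trans hTw).trans h1.ge
        exact ⟨((tauSigmaInv_le_iff hσ hσ0 hu1 hw).2 hu).trans (min_le_right _ _), hu0,
          hu1.trans h1.le⟩
    rw [hpre, Real.volume_Ioc, sub_zero, ofReal_tauSigma hσ hσ0 hw]

theorem map_tauSigmaInv_absolutelyContinuous :
    (volume.restrict (Ioc 0 1)).map (tauSigmaInv σ) ≪ volume.restrict (Ioc 0 1) :=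
  map_tauSigmaInv hσ hσ0 h1 ▸ withDensity_absolutelyContinuous _ _

theorem MeasureTheory.AEStronglyMeasurable.comp_tauSigmaInv {E : Type*} [TopologicalSpace E]
    {g : ℝ → E} (hg : AEStronglyMeasurable g (volume.restrict (Ioc 0 1))) :
    AEStronglyMeasurable (fun u => g (tauSigmaInv σ u)) (volume.restrict (Ioc 0 1)) :=
  (hg.mono_ac (map_tauSigmaInv_absolutelyContinuous hσ hσ0 h1)).comp_aemeasurable
    (aemeasurable_tauSigmaInv h1)

theorem integral_comp_tauSigmaInv {E : Type*} [NormedAddCommGroup E] [NormedSpace ℝ E]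
    {g : ℝ → E} (hg : AEStronglyMeasurable g (volume.restrict (Ioc 0 1))) :
    ∫ u in Ioc 0 1, g (tauSigmaInv σ u) = ∫ u in Ioc 0 1, σ u • g u := by
  have hσm : AEMeasurable σ (volume.restrict (Ioc 0 1)) :=
    (hσ.mono_set Ioc_subset_Icc_self).aestronglyMeasurable.aemeasurable
  rw [← integral_map (aemeasurable_tauSigmaInv h1)
      (hg.mono_ac (map_tauSigmaInv_absolutelyContinuous hσ hσ0 h1)),
    map_tauSigmaInv hσ hσ0 h1, integral_withDensity_eq_integral_toReal_smul₀ hσm.ennreal_ofReal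
      (ae_of_all _ fun _ => ENNReal.ofReal_lt_top)]
  refine setIntegral_congr_fun measurableSet_Ioc fun u hu => ?_
  rw [ENNReal.toReal_ofReal (hσ0 u (Ioc_subset_Icc_self hu))]

end Tau

section Uniform

variable {Ω : Type*} [MeasurableSpace Ω] {P : Measure Ω} [IsProbabilityMeasure P] {U : Ω → ℝ}

theorem map_eq_restrict_Ioc_of_isUniformRV (hU : Measurable U) (hUunif : IsUniformRV P U) :
    P.map U = volume.restrict (Ioc 0 1) := by
  have hcdf : ∀ w ∈ Icc (0:ℝ) 1, P {ω | U ω ≤ w} = ENNReal.ofReal w := fun w hw => by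
    rw [← ENNReal.ofReal_toReal (measure_ne_top P _), hUunif w hw]
  refine Measure.ext_of_Iic _ _ fun v => ?_
  rw [Measure.map_apply hU measurableSet_Iic, Measure.restrict_apply' measurableSet_Ioc,
    inter_comm, Ioc_inter_Iic, Real.volume_Ioc, sub_zero]
  change P {ω | U ω ≤ v} = _
  rcases lt_or_ge v 0 with hv | hv
  · rw [ENNReal.ofReal_of_nonpos (min_le_right _ _ |>.trans hv.le)]
    exact measure_mono_null (fun ω (hω : U ω ≤ v) => hω.trans hv.le)
      ((hcdf 0 ⟨le_rfl, zero_le_one⟩).trans ENNReal.ofReal_zero)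
  rcases le_or_gt v 1 with hv1 | hv1
  · rw [min_eq_right hv1, hcdf v ⟨hv, hv1⟩]
  · rw [min_eq_left hv1.le, ENNReal.ofReal_one]
    refine le_antisymm prob_le_one ?_
    calc (1 : ℝ≥0∞) = P {ω | U ω ≤ 1} := by rw [hcdf 1 ⟨zero_le_one, le_rfl⟩, ENNReal.ofReal_one]
      _ ≤ P {ω | U ω ≤ v} := measure_mono fun ω (hω : U ω ≤ 1) => hω.trans hv1.le

theorem integral_comp_of_isUniformRV (hU : Measurable U) (hUunif : IsUniformRV P U)
    {E : Type*} [NormedAddCommGroup E] [NormedSpace ℝ E]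
    {g : ℝ → E} (hg : AEStronglyMeasurable g (volume.restrict (Ioc 0 1))) :
    ∫ ω, g (U ω) ∂P = ∫ u in Ioc 0 1, g u := by
  rw [← map_eq_restrict_Ioc_of_isUniformRV hU hUunif] at hg ⊢
  exact (integral_map hU.aemeasurable hg).symm

end Uniform

theorem statement_3_general {Ω : Type*} [MeasurableSpace Ω] (P : Measure Ω) [IsProbabilityMeasure P]
    (L : Ω → ℝ) (hL : Measurable L)
    (σ : ℝ → ℝ)
    (hσ_nonneg : ∀ u ∈ Icc (0:ℝ) 1, 0 ≤ σ u)
    (hσ_mono : MonotoneOn σ (Icc (0:ℝ) 1))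
    (hσ_int : ∫ u in (0:ℝ)..1, σ u = 1)
    (U : Ω → ℝ) (hU : Measurable U) (hUunif : IsUniformRV P U)
    (Lσ : Ω → ℝ) (hLσ : Lσ = fun ω => quantileRV P L (tauSigmaInv σ (U ω))) :
    (∫ ω, Lσ ω ∂P) = (∫ u in (0:ℝ)..1, quantileRV P L (tauSigmaInv σ u)) ∧
      (∫ u in (0:ℝ)..1, quantileRV P L (tauSigmaInv σ u)) =
        (∫ u in (0:ℝ)..1, quantileRV P L u * σ u) ∧
      (∫ u in (0:ℝ)..1, quantileRV P L u * σ u) = distortedPremium P L σ := by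
  have hσ : IntegrableOn σ (Icc 0 1) := hσ_mono.integrableOn_isCompact isCompact_Icc
  have hQ := aestronglyMeasurable_quantileRV P hL
  subst hLσ
  refine ⟨?_, ?_, rfl⟩ <;> simp only [intervalIntegral.integral_of_le zero_le_one]
  · exact integral_comp_of_isUniformRV hU hUunif (hQ.comp_tauSigmaInv hσ hσ_nonneg hσ_int)
  · simp only [integral_comp_tauSigmaInv hσ hσ_nonneg hσ_int hQ, smul_eq_mul, mul_comm]

/-- for conjugate exponents `p, q`, a distortion `σ ∈ L^q` and `L ∈ L^p`,
the distorted loss `L_σ = F_L⁻¹(τ_σ⁻¹(U))` satisfies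
`E[L_σ] = ∫₀¹ F_L⁻¹(τ_σ⁻¹(u)) du = ∫₀¹ F_L⁻¹(u) σ(u) du = π_σ(L)`. -/
theorem statement_3 {Ω : Type*} [MeasurableSpace Ω] (P : Measure Ω) [IsProbabilityMeasure P]
    (L : Ω → ℝ) (hL : Measurable L)
    (σ : ℝ → ℝ)
    (hσ_nonneg : ∀ u ∈ Icc (0:ℝ) 1, 0 ≤ σ u)
    (hσ_mono : MonotoneOn σ (Icc (0:ℝ) 1))
    (hσ_int : ∫ u in (0:ℝ)..1, σ u = 1)
    (p q : ℝ≥0∞) (hpq : 1 / p + 1 / q = 1)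
    (hLp : MemLp L p P)
    (hσq : MemLp σ q (volume.restrict (Icc (0:ℝ) 1)))
    (U : Ω → ℝ) (hU : Measurable U) (hUunif : IsUniformRV P U)
    (Lσ : Ω → ℝ) (hLσ : Lσ = fun ω => quantileRV P L (tauSigmaInv σ (U ω))) :
    (∫ ω, Lσ ω ∂P) = (∫ u in (0:ℝ)..1, quantileRV P L (tauSigmaInv σ u)) ∧
      (∫ u in (0:ℝ)..1, quantileRV P L (tauSigmaInv σ u)) =
        (∫ u in (0:ℝ)..1, quantileRV P L u * σ u) ∧
      (∫ u in (0:ℝ)..1, quantileRV P L u * σ u) = distortedPremium P L σ :=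
  statement_3_general P L hL σ hσ_nonneg hσ_mono hσ_int U hU hUunif Lσ hLσ
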